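/- arXiv:1905.04356 — 7 statements merged into one kernel-verified Lean document; each statement's English description precedes it below -/
import Mathlib

section
/- Let K be a field, let F be in K[x]^{m×n} of degree at most d, let s be in ℕ^m, and let δ be a positive integer such that every s-reduced left kernel basis of F has all its rows of s-degree strictly less than δ. Let M in K[x] have degree at least δ + d, and let P in K[x]^{m×m} be an s-reduced matrix whose rows form a K[x]-basis of A_M(F). Then the submatrix of P formed by its rows of s-degree strictly less than δ is an s-reduced left kernel basis for F. -/
open Polynomial Matrix

noncomputable section

/-- The `s`-degree of a row vector `p ∈ K[x]^{1×m}`: `max_i (deg p_i + s_i)`,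
with the convention `deg 0 = ⊥`. -/
def rdeg {K : Type*} [Field K] {m : ℕ} (s : Fin m → ℤ) (p : Fin m → K[X]) : WithBot ℤ :=
  Finset.univ.sup fun i => WithBot.map (fun d : ℕ => (d : ℤ) + s i) (p i).degree

/-- The `s`-leading row of a row vector `p`: its `j`-th entry is the coefficient of
`p_j` of degree `rdeg_s(p) - s_j` (zero if this degree is negative). -/
def leadingRow {K : Type*} [Field K] {m : ℕ} (s : Fin m → ℤ) (p : Fin m → K[X]) :
    Fin m → K := fun j =>
  if 0 ≤ (rdeg s p).unbotD 0 - s j then (p j).coeff ((rdeg s p).unbotD 0 - s j).toNat else 0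

/-- A family of row vectors is `s`-reduced if the rows of its `s`-leading matrix are
linearly independent over `K` (full row rank); for a square matrix this is
equivalent to the `s`-leading matrix being invertible over `K`. -/
def IsRowReduced {K : Type*} [Field K] {m : ℕ} {ι : Type*} (s : Fin m → ℤ)
    (rows : ι → Fin m → K[X]) : Prop :=
  LinearIndependent K fun i => leadingRow s (rows i)

/-- The module `A_M(F)` of row vectors `p` with `p F = 0 (mod M)`. -/
def approxModule {K : Type*} [Field K] {m n : ℕ} (M : K[X]) (F : Matrix (Fin m) (Fin n) K[X]) :
    Submodule K[X] (Fin m → K[X]) where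
  carrier := {p | ∀ j, M ∣ (p ᵥ* F) j}
  add_mem' := by
    intro p q hp hq j
    rw [Matrix.add_vecMul, Pi.add_apply]
    exact dvd_add (hp j) (hq j)
  zero_mem' := by
    intro j
    simp [Matrix.zero_vecMul]
  smul_mem' := by
    intro c p hp j
    rw [Matrix.smul_vecMul, Pi.smul_apply, smul_eq_mul]
    exact Dvd.dvd.mul_left (hp j) c

/-- The left kernel `{p ∈ K[x]^{1×m} : p F = 0}` of `F`, as a `K[x]`-module. -/
def kernelModule {K : Type*} [Field K] {m n : ℕ} (F : Matrix (Fin m) (Fin n) K[X]) :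
    Submodule K[X] (Fin m → K[X]) :=
  LinearMap.ker F.vecMulLinear

/-- A family of row vectors forms a basis of a submodule `N` if it is linearly
independent over `K[x]` and spans `N`. -/
def IsBasisOf {K : Type*} [Field K] {m : ℕ} {ι : Type*}
    (rows : ι → Fin m → K[X]) (N : Submodule K[X] (Fin m → K[X])) : Prop :=
  LinearIndependent K[X] rows ∧ Submodule.span K[X] (Set.range rows) = N

/-!
A row `p` of `A_M(F)` with `rdeg_s p < δ` has entries of degree `< δ`, so `p F` has degree
`< δ + d ≤ deg M` and, being divisible by `M`, vanishes. Conversely, row reduction (cancelling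
dependencies among leading rows lowers the total degree) gives the kernel an `s`-reduced basis,
whose rows have `s`-degree `< δ` by hypothesis. By the predictable degree property of `P`, an
element of `A_M(F)` of `s`-degree `< δ` is a combination of the rows of `P` of `s`-degree `< δ`
only, so these rows span the kernel.
-/

section RowDegree

variable {K : Type*} [Field K] {m : ℕ} {s : Fin m → ℤ}

lemma rdeg_eq_bot_iff {p : Fin m → K[X]} : rdeg s p = ⊥ ↔ p = 0 := by
  simp [rdeg, funext_iff]

lemma coe_unbotD_rdeg {p : Fin m → K[X]} (hp : p ≠ 0) :
    (((rdeg s p).unbotD 0 : ℤ) : WithBot ℤ) = rdeg s p := by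
  obtain ⟨t, ht⟩ := WithBot.ne_bot_iff_exists.mp (mt rdeg_eq_bot_iff.mp hp)
  rw [← ht, WithBot.unbotD_coe]

lemma rdeg_le_iff {p : Fin m → K[X]} {D : ℤ} :
    rdeg s p ≤ D ↔ ∀ j, p j ≠ 0 → ((p j).natDegree : ℤ) + s j ≤ D := by
  simp only [rdeg, Finset.sup_le_iff, Finset.mem_univ, true_implies]
  refine forall_congr' fun j => ?_
  rcases eq_or_ne (p j) 0 with h | h
  · simp [h]
  · simp only [degree_eq_natDegree h, Nat.cast_withBot, WithBot.map_coe, ne_eq, h,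
      not_false_eq_true, true_implies]
    norm_cast

lemma rdeg_le_iff_coeff {p : Fin m → K[X]} {D : ℤ} :
    rdeg s p ≤ D ↔ ∀ j (e : ℕ), D < e + s j → (p j).coeff e = 0 := by
  rw [rdeg_le_iff]
  refine forall_congr' fun j => ⟨fun h e he => ?_, fun h hj => ?_⟩
  · by_contra hc
    have := h (fun h0 => hc (by simp [h0]))
    have := le_natDegree_of_ne_zero hc
    omega
  · by_contra hlt
    exact hj (leadingCoeff_eq_zero.mp (h _ (not_le.mp hlt)))

lemma rdeg_lt_iff_le_sub_one {p : Fin m → K[X]} {D : ℤ} :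
    rdeg s p < D ↔ rdeg s p ≤ (D - 1 : ℤ) := by
  cases rdeg s p with
  | bot => simp
  | coe t => norm_cast; omega

lemma rdeg_smul_le (c : K[X]) {p : Fin m → K[X]} {t : ℤ} (hp : rdeg s p ≤ t) :
    rdeg s (c • p) ≤ (c.natDegree + t : ℤ) := by
  rw [rdeg_le_iff] at hp ⊢
  intro j hj
  have hpj : p j ≠ 0 := right_ne_zero_of_mul hj
  have := natDegree_mul_le (p := c) (q := p j)
  have := hp j hpj
  simp only [Pi.smul_apply, smul_eq_mul] at *
  omega

lemma rdeg_sum_le {ι : Type*} {t : Finset ι} {f : ι → Fin m → K[X]} {D : ℤ}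
    (h : ∀ i ∈ t, rdeg s (f i) ≤ D) : rdeg s (∑ i ∈ t, f i) ≤ D := by
  refine Finset.sum_induction f (fun p => rdeg s p ≤ D) (fun p q hp hq => ?_) ?_ h
  · rw [rdeg_le_iff_coeff] at *
    intro j e he
    simp [hp j e he, hq j e he]
  · simp [rdeg_eq_bot_iff.mpr rfl]

lemma unbotD_rdeg_nonneg (hs : ∀ j, 0 ≤ s j) {p : Fin m → K[X]} (hp : p ≠ 0) :
    0 ≤ (rdeg s p).unbotD 0 := by
  obtain ⟨j, hj⟩ : ∃ j, p j ≠ 0 := Function.ne_iff.mp hp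
  have := rdeg_le_iff.mp (coe_unbotD_rdeg (s := s) hp).ge j hj
  have := hs j
  omega

end RowDegree

section CoeffRow

variable {K : Type*} [Field K] {m : ℕ} {s : Fin m → ℤ}

variable (s) in
def coeffRow (D : ℤ) : (Fin m → K[X]) →ₗ[K] Fin m → K :=
  LinearMap.pi fun j =>
    if 0 ≤ D - s j then (lcoeff K (D - s j).toNat).comp (LinearMap.proj j) else 0

lemma coeffRow_apply (D : ℤ) (p : Fin m → K[X]) (j : Fin m) :
    coeffRow s D p j = if 0 ≤ D - s j then (p j).coeff (D - s j).toNat else 0 := by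
  simp only [coeffRow, LinearMap.pi_apply]
  split_ifs <;> rfl

lemma leadingRow_eq_coeffRow (p : Fin m → K[X]) :
    leadingRow s p = coeffRow s ((rdeg s p).unbotD 0) p := by
  ext j
  rw [coeffRow_apply, leadingRow]

lemma coeffRow_eq_zero_of_rdeg_lt {p : Fin m → K[X]} {D : ℤ} (h : rdeg s p < D) :
    coeffRow s D p = 0 := by
  rw [rdeg_lt_iff_le_sub_one, rdeg_le_iff_coeff] at h
  ext j
  rw [coeffRow_apply]
  split_ifs with hj
  · exact h j _ (by omega)
  · rfl

lemma le_rdeg_of_coeffRow_ne_zero {p : Fin m → K[X]} {D : ℤ} (h : coeffRow s D p ≠ 0) :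
    (D : WithBot ℤ) ≤ rdeg s p :=
  not_lt.mp (mt coeffRow_eq_zero_of_rdeg_lt h)

lemma rdeg_lt_of_coeffRow_eq_zero {p : Fin m → K[X]} {D : ℤ} (hle : rdeg s p ≤ D)
    (h : coeffRow s D p = 0) : rdeg s p < D := by
  rw [rdeg_le_iff_coeff] at hle
  rw [rdeg_lt_iff_le_sub_one, rdeg_le_iff_coeff]
  intro j e he
  rcases (by omega : D < e + s j ∨ e + s j = D) with hlt | heq
  · exact hle j e hlt
  · have := congrFun h j
    rwa [coeffRow_apply, if_pos (by omega), (by omega : (D - s j).toNat = e)] at this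

lemma ne_zero_of_isRowReduced {ι : Type*} {B : ι → Fin m → K[X]} (hB : IsRowReduced s B)
    (i : ι) : B i ≠ 0 := fun h => hB.ne_zero i (by rw [h, leadingRow_eq_coeffRow, map_zero])

lemma coeffRow_smul {c : K[X]} {p : Fin m → K[X]} (hp : p ≠ 0) {D : ℤ}
    (hD : c.natDegree + (rdeg s p).unbotD 0 ≤ D) :
    coeffRow s D (c • p) = c.coeff (D - (rdeg s p).unbotD 0).toNat • leadingRow s p := by
  set t := (rdeg s p).unbotD 0
  have hpt : ∀ j, p j ≠ 0 → ((p j).natDegree : ℤ) + s j ≤ t :=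
    rdeg_le_iff.mp (coe_unbotD_rdeg hp).ge
  rcases hD.lt_or_eq with hlt | rfl
  · rw [coeffRow_eq_zero_of_rdeg_lt ((rdeg_smul_le c (coe_unbotD_rdeg (s := s) hp).ge).trans_lt
      (by exact_mod_cast hlt)), coeff_eq_zero_of_natDegree_lt (by omega), zero_smul]
  ext j
  rw [coeffRow_apply, Pi.smul_apply, Pi.smul_apply, leadingRow_eq_coeffRow, coeffRow_apply]
  rcases eq_or_ne (p j) 0 with hpj | hpj
  · simp [hpj]
  have := hpt j hpj
  rw [if_pos (by omega), if_pos (by omega), (by omega : (c.natDegree + t - s j).toNat =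
    c.natDegree + (t - s j).toNat), (by omega : (c.natDegree + t - t).toNat = c.natDegree),
    smul_eq_mul, smul_eq_mul, coeff_mul_add_eq_of_natDegree_le le_rfl (by omega)]

end CoeffRow

section PredictableDegree

variable {K : Type*} [Field K] {m : ℕ} {s : Fin m → ℤ} {ι : Type*} [Fintype ι]
  {B : ι → Fin m → K[X]} {c : ι → K[X]} {D : ℤ}

lemma rdeg_sum_smul_le (hB : ∀ i, B i ≠ 0)
    (hD : ∀ i, c i ≠ 0 → (c i).natDegree + (rdeg s (B i)).unbotD 0 ≤ D) :
    rdeg s (∑ i, c i • B i) ≤ D := by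
  refine rdeg_sum_le fun i _ => ?_
  by_cases hci : c i = 0
  · simp [hci, rdeg_eq_bot_iff.mpr rfl]
  · exact (rdeg_smul_le _ (coe_unbotD_rdeg (hB i)).ge).trans (by exact_mod_cast hD i hci)

lemma coeffRow_sum_smul (hB : ∀ i, B i ≠ 0)
    (hD : ∀ i, c i ≠ 0 → (c i).natDegree + (rdeg s (B i)).unbotD 0 ≤ D) :
    coeffRow s D (∑ i, c i • B i) =
      ∑ i, (c i).coeff (D - (rdeg s (B i)).unbotD 0).toNat • leadingRow s (B i) := by
  rw [map_sum]
  refine Finset.sum_congr rfl fun i _ => ?_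
  by_cases hci : c i = 0
  · simp [hci]
  · exact coeffRow_smul (hB i) (hD i hci)

/-- The predictable degree property of `s`-reduced families. -/
theorem IsRowReduced.rdeg_le_rdeg_sum_smul (hB : IsRowReduced s B) {i₀ : ι} (hc : c i₀ ≠ 0) :
    rdeg s (B i₀) ≤ rdeg s (∑ i, c i • B i) := by
  classical
  have hB0 := ne_zero_of_isRowReduced hB
  set t : ι → ℤ := fun i => (rdeg s (B i)).unbotD 0
  obtain ⟨i₁, hi₁, hmax⟩ := (Finset.univ.filter fun i => c i ≠ 0).exists_max_image
    (fun i => (c i).natDegree + t i) ⟨i₀, by simpa using hc⟩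
  simp only [Finset.mem_filter, Finset.mem_univ, true_and] at hi₁ hmax
  have hrow := coeffRow_sum_smul hB0 hmax
  have hne : coeffRow s ((c i₁).natDegree + t i₁) (∑ i, c i • B i) ≠ 0 := by
    intro h0
    have := Fintype.linearIndependent_iff.mp hB _ (hrow ▸ h0) i₁
    rw [add_sub_cancel_right, Int.toNat_natCast, coeff_natDegree] at this
    exact hi₁ (leadingCoeff_eq_zero.mp this)
  calc rdeg s (B i₀) = t i₀ := (coe_unbotD_rdeg (hB0 i₀)).symm
    _ ≤ ((c i₁).natDegree + t i₁ : ℤ) := by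
        have := hmax i₀ hc
        exact_mod_cast (by omega : t i₀ ≤ (c i₁).natDegree + t i₁)
    _ ≤ rdeg s (∑ i, c i • B i) := le_rdeg_of_coeffRow_ne_zero hne

end PredictableDegree

section Update

variable {R M ι : Type*} [CommRing R] [AddCommGroup M] [Module R M] [Fintype ι] [DecidableEq ι]

lemma Submodule.span_range_update_sum_smul (v : ι → M) {c : ι → R} {j : ι}
    (hc : IsUnit (c j)) :
    span R (Set.range (Function.update v j (∑ i, c i • v i))) = span R (Set.range v) := by
  set w := Function.update v j (∑ i, c i • v i)
  have hwj : w j = ∑ i, c i • v i := Function.update_self ..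
  have hw : ∀ i ≠ j, w i = v i := fun i hi => Function.update_of_ne hi _ _
  refine le_antisymm (span_le.mpr ?_) (span_le.mpr ?_) <;> rintro _ ⟨i, rfl⟩
  · rcases eq_or_ne i j with rfl | hi
    · rw [hwj]
      exact sum_mem fun i _ => smul_mem _ _ (subset_span ⟨i, rfl⟩)
    · exact subset_span ⟨i, (hw i hi).symm⟩
  · rcases eq_or_ne i j with rfl | hi
    · have hvi : v i = (↑hc.unit⁻¹ : R) • (w i - ∑ k ∈ Finset.univ.erase i, c k • w k) := by
        rw [Finset.sum_congr rfl fun k hk => by rw [hw k (Finset.ne_of_mem_erase hk)], hwj,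
          ← Finset.add_sum_erase _ _ (Finset.mem_univ i), add_sub_cancel_right, smul_smul,
          IsUnit.val_inv_mul, one_smul]
      rw [hvi]
      exact smul_mem _ _ (sub_mem (subset_span ⟨i, rfl⟩)
        (sum_mem fun k _ => smul_mem _ _ (subset_span ⟨k, rfl⟩)))
    · exact subset_span ⟨i, hw i hi⟩

lemma LinearIndependent.update_sum_smul {v : ι → M} (hv : LinearIndependent R v)
    {c : ι → R} {j : ι} (hc : c j ∈ nonZeroDivisors R) :
    LinearIndependent R (Function.update v j (∑ i, c i • v i)) :=
  hv.update j _ ⟨1, one_mem _, Finsupp.equivFunOnFinite.symm c, hc, by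
    simp [Finsupp.linearCombination_apply, Finsupp.sum_fintype]⟩

end Update

section Reduction

variable {K : Type*} [Field K] {m : ℕ} {s : Fin m → ℤ} {ι : Type*} [Fintype ι]

lemma IsBasisOf.update_sum_smul [DecidableEq ι] {B : ι → Fin m → K[X]}
    {N : Submodule K[X] (Fin m → K[X])} (hB : IsBasisOf B N) {c : ι → K[X]} {j : ι}
    (hc : IsUnit (c j)) : IsBasisOf (Function.update B j (∑ i, c i • B i)) N :=
  ⟨hB.1.update_sum_smul hc.mem_nonZeroDivisors,
    (Submodule.span_range_update_sum_smul B hc).trans hB.2⟩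

lemma toNat_unbotD_rdeg_lt (hs : ∀ j, 0 ≤ s j) {p q : Fin m → K[X]} (hq : q ≠ 0)
    (h : rdeg s q < rdeg s p) : ((rdeg s q).unbotD 0).toNat < ((rdeg s p).unbotD 0).toNat := by
  have hp : p ≠ 0 := fun hp => ne_bot_of_gt h (rdeg_eq_bot_iff.mpr hp)
  rw [← coe_unbotD_rdeg hq, ← coe_unbotD_rdeg hp, WithBot.coe_lt_coe] at h
  have := unbotD_rdeg_nonneg hs hq
  omega

variable (s) in
/-- The termination measure of row reduction (junk on zero rows or negative degrees). -/
def rdegSum (B : ι → Fin m → K[X]) : ℕ :=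
  ∑ i, ((rdeg s (B i)).unbotD 0).toNat

/-- A `K`-linear dependency among the leading rows is cancelled by adding monomial multiples
of the other rows to a row of maximal degree in it. -/
lemma IsBasisOf.exists_rdegSum_lt (hs : ∀ j, 0 ≤ s j) {B : ι → Fin m → K[X]}
    {N : Submodule K[X] (Fin m → K[X])} (hB : IsBasisOf B N) (hred : ¬ IsRowReduced s B) :
    ∃ B' : ι → Fin m → K[X], IsBasisOf B' N ∧ rdegSum s B' < rdegSum s B := by
  classical
  have hB0 : ∀ i, B i ≠ 0 := hB.1.ne_zero
  obtain ⟨g, hg, i', hi'⟩ := Fintype.not_linearIndependent_iff.mp hred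
  set t : ι → ℤ := fun i => (rdeg s (B i)).unbotD 0
  obtain ⟨i₀, hi₀, hmax⟩ := (Finset.univ.filter fun i => g i ≠ 0).exists_max_image t
    ⟨i', by simpa using hi'⟩
  simp only [Finset.mem_filter, Finset.mem_univ, true_and] at hi₀ hmax
  set c : ι → K[X] := fun i => monomial (t i₀ - t i).toNat (g i)
  have hc : IsUnit (c i₀) := by
    simpa [c, monomial_zero_left] using hi₀
  have hD : ∀ i, c i ≠ 0 → (c i).natDegree + t i ≤ t i₀ := fun i hci => by
    have hgi : g i ≠ 0 := fun h => hci (by simp [c, h])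
    have : (c i).natDegree ≤ (t i₀ - t i).toNat := natDegree_monomial_le _
    have := hmax i hgi
    omega
  set q := ∑ i, c i • B i
  have hq : rdeg s q < rdeg s (B i₀) := by
    refine (coe_unbotD_rdeg (hB0 i₀)).symm ▸ rdeg_lt_of_coeffRow_eq_zero
      (rdeg_sum_smul_le hB0 hD) ?_
    rw [coeffRow_sum_smul hB0 hD, ← hg]
    simp [c, t]
  have hB' := hB.update_sum_smul hc
  have hq0 : Function.update B i₀ q i₀ ≠ 0 := hB'.1.ne_zero i₀
  refine ⟨_, hB', Finset.sum_lt_sum (fun i _ => ?_) ⟨i₀, Finset.mem_univ _, ?_⟩⟩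
  · rcases eq_or_ne i i₀ with rfl | hi
    · exact (toNat_unbotD_rdeg_lt hs hq0 (by rwa [Function.update_self])).le
    · simp [Function.update_of_ne hi]
  · exact toNat_unbotD_rdeg_lt hs hq0 (by rwa [Function.update_self])

theorem IsBasisOf.exists_isRowReduced (hs : ∀ j, 0 ≤ s j) {B : ι → Fin m → K[X]}
    {N : Submodule K[X] (Fin m → K[X])} (hB : IsBasisOf B N) :
    ∃ B' : ι → Fin m → K[X], IsBasisOf B' N ∧ IsRowReduced s B' := by
  induction h : rdegSum s B using Nat.strong_induction_on generalizing B with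
  | _ n ih =>
    by_cases hred : IsRowReduced s B
    · exact ⟨B, hB, hred⟩
    obtain ⟨B', hB', hlt⟩ := hB.exists_rdegSum_lt hs hred
    exact ih _ (h ▸ hlt) hB' rfl

theorem Submodule.exists_isBasisOf_isRowReduced (hs : ∀ j, 0 ≤ s j)
    (N : Submodule K[X] (Fin m → K[X])) :
    ∃ (k : ℕ) (B : Fin k → Fin m → K[X]), IsBasisOf B N ∧ IsRowReduced s B := by
  obtain ⟨k, b⟩ := Submodule.basisOfPid (Pi.basisFun K[X] (Fin m)) N
  have hb : IsBasisOf (fun i => (b i : Fin m → K[X])) N :=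
    ⟨b.linearIndependent.map' N.subtype N.ker_subtype, by
      rw [Set.range_comp', ← N.coe_subtype, Submodule.span_image, b.span_eq,
        Submodule.map_subtype_top]⟩
  obtain ⟨B, hB⟩ := hb.exists_isRowReduced hs
  exact ⟨k, B, hB⟩

end Reduction

lemma IsRowReduced.mem_span_rdeg_lt {K : Type*} [Field K] {m : ℕ} {s : Fin m → ℤ} {ι : Type*}
    [Fintype ι] {B : ι → Fin m → K[X]} (hB : IsRowReduced s B) {v : Fin m → K[X]}
    (hv : v ∈ Submodule.span K[X] (Set.range B)) {D : WithBot ℤ} (hvD : rdeg s v < D) :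
    v ∈ Submodule.span K[X] (Set.range fun i : {i // rdeg s (B i) < D} => B i) := by
  obtain ⟨c, rfl⟩ := (Submodule.mem_span_range_iff_exists_fun K[X]).mp hv
  refine Submodule.sum_mem _ fun i _ => ?_
  by_cases hci : c i = 0
  · simp [hci]
  · exact Submodule.smul_mem _ _ (Submodule.subset_span
      ⟨⟨i, (hB.rdeg_le_rdeg_sum_smul hci).trans_lt hvD⟩, rfl⟩)

section ApproximantBasis

variable {K : Type*} [Field K] {m n : ℕ} {F : Matrix (Fin m) (Fin n) K[X]}

lemma kernelModule_le_approxModule (M : K[X]) : kernelModule F ≤ approxModule M F :=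
  fun p hp j => by simp [show p ᵥ* F = 0 from hp]

lemma degree_lt_of_rdeg_lt {s : Fin m → ℤ} (hs : ∀ j, 0 ≤ s j) {p : Fin m → K[X]} {δ : ℕ}
    (h : rdeg s p < (δ : ℤ)) (j : Fin m) : (p j).degree < δ := by
  rcases eq_or_ne (p j) 0 with hpj | hpj
  · simp [hpj]
  have := rdeg_le_iff.mp (rdeg_lt_iff_le_sub_one.mp h) j hpj
  have := hs j
  rw [degree_eq_natDegree hpj]
  exact_mod_cast (by omega : (p j).natDegree < δ)

lemma mem_kernelModule_of_rdeg_lt {d δ : ℕ} (hF : ∀ i j, (F i j).degree ≤ d) {M : K[X]}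
    (hM : ((δ + d : ℕ) : WithBot ℕ) ≤ M.degree) {s : Fin m → ℤ} (hs : ∀ j, 0 ≤ s j)
    {p : Fin m → K[X]} (hp : p ∈ approxModule M F) (hps : rdeg s p < (δ : ℤ)) :
    p ∈ kernelModule F := by
  refine LinearMap.mem_ker.mpr (funext fun j => ?_)
  refine eq_zero_of_dvd_of_degree_lt (hp j) (lt_of_lt_of_le ?_ hM)
  simp only [vecMulLinear_apply, vecMul, dotProduct]
  refine (degree_sum_le _ _).trans_lt
    ((Finset.sup_lt_iff (WithBot.bot_lt_coe _)).mpr fun i _ => ?_)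
  rcases eq_or_ne (F i j) 0 with h0 | h0
  · simp [h0]
  rw [degree_mul, Nat.cast_add]
  exact WithBot.add_lt_add_of_lt_of_le (degree_ne_bot.mpr h0)
    (degree_lt_of_rdeg_lt hs hps i) (hF i j)

end ApproximantBasis

theorem stmt0_general {K : Type*} [Field K] {m n : ℕ} (F : Matrix (Fin m) (Fin n) K[X]) (d : ℕ)
    (hF : ∀ i j, (F i j).degree ≤ (d : WithBot ℕ))
    (s : Fin m → ℕ) (δ : ℕ)
    (hbound : ∀ (k : ℕ) (B : Fin k → Fin m → K[X]),
      IsBasisOf B (kernelModule F) → IsRowReduced (fun i => (s i : ℤ)) B →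
      ∀ i, rdeg (fun i => (s i : ℤ)) (B i) < ((δ : ℤ) : WithBot ℤ))
    (M : K[X]) (hM : ((δ + d : ℕ) : WithBot ℕ) ≤ M.degree)
    (P : Matrix (Fin m) (Fin m) K[X])
    (hred : IsUnit (Matrix.of fun i j => leadingRow (fun i => (s i : ℤ)) (P i) j :
      Matrix (Fin m) (Fin m) K))
    (hbasis : IsBasisOf (fun i => P i) (approxModule M F)) :
    IsBasisOf
        (fun i : {i : Fin m // rdeg (fun i => (s i : ℤ)) (P i) < ((δ : ℤ) : WithBot ℤ)} =>
          P i.1)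
        (kernelModule F) ∧
      IsRowReduced (fun i => (s i : ℤ))
        (fun i : {i : Fin m // rdeg (fun i => (s i : ℤ)) (P i) < ((δ : ℤ) : WithBot ℤ)} =>
          P i.1) := by
  have hs : ∀ j, 0 ≤ (s j : ℤ) := fun j => Int.natCast_nonneg _
  have hPred : IsRowReduced (fun i => (s i : ℤ)) P :=
    Matrix.linearIndependent_rows_iff_isUnit.mpr hred
  obtain ⟨k, B, hB, hBred⟩ := Submodule.exists_isBasisOf_isRowReduced hs (kernelModule F)
  refine ⟨⟨hbasis.1.comp _ Subtype.val_injective, le_antisymm ?_ ?_⟩,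
    hPred.comp _ Subtype.val_injective⟩
  · refine Submodule.span_le.mpr ?_
    rintro _ ⟨i, rfl⟩
    exact mem_kernelModule_of_rdeg_lt hF hM hs
      (hbasis.2 ▸ Submodule.subset_span ⟨i.1, rfl⟩) i.2
  · rw [← hB.2, Submodule.span_le]
    rintro _ ⟨i, rfl⟩
    have hBi : B i ∈ approxModule M F :=
      kernelModule_le_approxModule M (hB.2 ▸ Submodule.subset_span ⟨i, rfl⟩)
    exact hPred.mem_span_rdeg_lt (hbasis.2 ▸ hBi) (hbound k B hB hBred i)

/-- let `F ∈ K[x]^{m×n}` of degree at most `d`, `s ∈ ℕ^m`, and `δ > 0`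
be such that every `s`-reduced left kernel basis of `F` has all rows of `s`-degree
less than `δ`. If `deg M ≥ δ + d` and `P` is an `s`-reduced matrix whose rows form
a basis of `A_M(F)`, then the rows of `P` of `s`-degree less than `δ` form an
`s`-reduced left kernel basis of `F`. -/
theorem stmt0 {K : Type*} [Field K] {m n : ℕ} (F : Matrix (Fin m) (Fin n) K[X]) (d : ℕ)
    (hF : ∀ i j, (F i j).degree ≤ (d : WithBot ℕ))
    (s : Fin m → ℕ) (δ : ℕ) (hδ : 0 < δ)
    (hbound : ∀ (k : ℕ) (B : Fin k → Fin m → K[X]),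
      IsBasisOf B (kernelModule F) → IsRowReduced (fun i => (s i : ℤ)) B →
      ∀ i, rdeg (fun i => (s i : ℤ)) (B i) < ((δ : ℤ) : WithBot ℤ))
    (M : K[X]) (hM : ((δ + d : ℕ) : WithBot ℕ) ≤ M.degree)
    (P : Matrix (Fin m) (Fin m) K[X])
    (hred : IsUnit (Matrix.of fun i j => leadingRow (fun i => (s i : ℤ)) (P i) j :
      Matrix (Fin m) (Fin m) K))
    (hbasis : IsBasisOf (fun i => P i) (approxModule M F)) :
    IsBasisOf
        (fun i : {i : Fin m // rdeg (fun i => (s i : ℤ)) (P i) < ((δ : ℤ) : WithBot ℤ)} =>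
          P i.1)
        (kernelModule F) ∧
      IsRowReduced (fun i => (s i : ℤ))
        (fun i : {i : Fin m // rdeg (fun i => (s i : ℤ)) (P i) < ((δ : ℤ) : WithBot ℤ)} =>
          P i.1) :=
  stmt0_general F d hF s δ hbound M hM P hred hbasis

end
end

section
/- Let K be a field, D a positive integer, and let H in K(x)^{n×n} admit a right fraction description H = R̃ Q̃^{−1} with Q̃ nonsingular, deg Q̃ ≤ D and deg R̃ < D. Let M in K[x] have degree at least 2D and be coprime to det Q̃, and let H̄ in K[x]^{n×n} be H reduced modulo M (each entry a/b replaced by a·b^{−1} mod M). If q, r in K[x]^{1×n} satisfy deg q ≤ D, deg r < D, and M divides every entry of q·H̄ − r, then q·H = r holds in K(x)^{1×n}. -/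
/-! Clearing denominators gives `det Q̃ • H = R̃ adj Q̃`. Every denominator of `H` divides `det Q̃`,
which is invertible modulo `M`, so `H̄ Q̃ ≡ R̃ (mod M)` and hence `q R̃ ≡ q H̄ Q̃ ≡ r Q̃ (mod M)`.
Since `q R̃ - r Q̃` has degree `< 2D ≤ deg M`, it vanishes; then `q H Q̃ = q R̃ = r Q̃` over `K(x)`,
where `Q̃` is invertible. -/

open Polynomial Matrix

theorem RingHom.map_mul_adjugate {n A S : Type*} [Fintype n] [DecidableEq n] [CommRing A]
    [CommRing S] (f : A →+* S) (C Q : Matrix n n A) :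
    (C * Q.adjugate).map f = C.map f * (Q.map f).adjugate := by
  rw [Matrix.map_mul, ← f.mapMatrix_apply Q.adjugate, f.map_adjugate, f.mapMatrix_apply]

namespace Matrix
variable {n R : Type*} [Fintype n] [DecidableEq n] [CommRing R]

theorem det_smul_eq_mul_adjugate_of_mul_eq {B Q C : Matrix n n R} (h : B * Q = C) :
    Q.det • B = C * Q.adjugate := by
  rw [← h, Matrix.mul_assoc, mul_adjugate, Matrix.mul_smul, Matrix.mul_one]

theorem mul_eq_of_det_smul_eq_mul_adjugate {B Q C : Matrix n n R} (hQ : IsUnit Q.det)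
    (h : Q.det • B = C * Q.adjugate) : B * Q = C := by
  refine hQ.smul_left_cancel.mp ?_
  rw [← Matrix.smul_mul, h, Matrix.mul_assoc, adjugate_mul, Matrix.mul_smul, Matrix.mul_one]

theorem vecMul_eq_iff_of_mul_eq {B Q C : Matrix n n R} (hQ : IsUnit Q.det) (h : B * Q = C)
    (v w : n → R) : v ᵥ* B = w ↔ v ᵥ* C = w ᵥ* Q := by
  rw [← h, ← vecMul_vecMul]
  exact (vecMul_injective_of_isUnit ((isUnit_iff_isUnit_det Q).mpr hQ)).eq_iff.symm

/-- `hB` is the congruence `B ≡ C Q⁻¹ (mod M)` with the denominator `det Q` cleared. -/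
theorem dvd_vecMul_sub_vecMul {M : R} {B Q C : Matrix n n R} {v w : n → R}
    (hcop : IsCoprime M Q.det)
    (hB : ∀ i j, M ∣ Q.det * B i j - (C * Q.adjugate) i j)
    (hv : ∀ j, M ∣ (v ᵥ* B) j - w j) (j : n) : M ∣ (v ᵥ* C) j - (w ᵥ* Q) j := by
  set π := Ideal.Quotient.mk (Ideal.span {M})
  have hπ (a b : R) : π a = π b ↔ M ∣ a - b := by
    rw [Ideal.Quotient.mk_eq_mk_iff_sub_mem, Ideal.mem_span_singleton]
  have hdetπ : (Q.map π).det = π Q.det := (π.map_det Q).symm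
  have hπdet : IsUnit (Q.map π).det := by
    have := hcop.map π
    rwa [Ideal.Quotient.mk_singleton_self, isCoprime_zero_left, ← hdetπ] at this
  have hBQ : B.map π * Q.map π = C.map π := by
    refine mul_eq_of_det_smul_eq_mul_adjugate hπdet ?_
    rw [hdetπ, ← π.map_mul_adjugate]
    ext i j
    simpa using (hπ _ _).mpr (hB i j)
  have hmod := (vecMul_eq_iff_of_mul_eq hπdet hBQ (π ∘ v) (π ∘ w)).mp <| by
    funext k
    rw [← RingHom.map_vecMul]
    exact (hπ _ _).mpr (hv k)
  exact (hπ _ _).mp (by simpa [RingHom.map_vecMul] using congrFun hmod j)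

end Matrix

theorem RatFunc.dvd_mul_sub_of_algebraMap_mul_eq {K : Type*} [Field K] {f : RatFunc K}
    {d a h M : K[X]} (hf : algebraMap K[X] (RatFunc K) d * f = algebraMap K[X] (RatFunc K) a)
    (hcop : IsCoprime M d) (hh : M ∣ f.denom * h - f.num) : M ∣ d * h - a := by
  have hcross : d * f.num = f.denom * a := by
    apply RatFunc.algebraMap_injective K
    have hnum : algebraMap K[X] (RatFunc K) f.num = f * algebraMap K[X] (RatFunc K) f.denom :=
      (div_eq_iff (RatFunc.algebraMap_ne_zero (RatFunc.denom_ne_zero f))).mp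
        (RatFunc.num_div_denom f)
    rw [map_mul, map_mul, ← hf, hnum]
    ring
  have hden_dvd : f.denom ∣ d := (RatFunc.isCoprime_num_denom f).symm.dvd_of_dvd_mul_right
    (Dvd.intro a hcross.symm)
  refine (hcop.of_isCoprime_of_dvd_right hden_dvd).dvd_of_dvd_mul_left ?_
  have : f.denom * (d * h - a) = d * (f.denom * h - f.num) := by linear_combination hcross
  rw [this]
  exact hh.mul_left d

theorem Polynomial.degree_dotProduct_lt {R ι : Type*} [Semiring R] [Fintype ι] {u v : ι → R[X]}
    {a b : ℕ} (hu : ∀ i, (u i).degree ≤ a) (hv : ∀ i, (v i).degree < b) :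
    (u ⬝ᵥ v).degree < ↑(a + b) := by
  refine (degree_sum_le _ _).trans_lt ((Finset.sup_lt_iff (WithBot.bot_lt_coe _)).mpr ?_)
  intro i _
  calc (u i * v i).degree ≤ (u i).degree + (v i).degree := degree_mul_le _ _
    _ ≤ a + (v i).degree := add_le_add_left (hu i) _
    _ < a + b := WithBot.add_lt_add_left (WithBot.coe_ne_bot) (hv i)
    _ = ↑(a + b) := by norm_cast

theorem Polynomial.degree_vecMul_sub_vecMul_lt {R ι κ : Type*} [CommRing R] [Fintype ι]
    {u v : ι → R[X]} {A B : Matrix ι κ R[X]} {D : ℕ} (hu : ∀ i, (u i).degree ≤ D)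
    (hv : ∀ i, (v i).degree < D) (hA : ∀ i j, (A i j).degree < D)
    (hB : ∀ i j, (B i j).degree ≤ D) (j : κ) :
    ((u ᵥ* A) j - (v ᵥ* B) j).degree < ↑(2 * D) := by
  rw [two_mul]
  refine (degree_sub_le _ _).trans_lt (max_lt ?_ ?_)
  · exact degree_dotProduct_lt hu (fun i => hA i j)
  · rw [show (v ᵥ* B) j = (fun i => B i j) ⬝ᵥ v from dotProduct_comm _ _]
    exact degree_dotProduct_lt (fun i => hB i j) hv

theorem stmt4_general {K : Type*} [Field K] {n : ℕ} (D : ℕ)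
    (H : Matrix (Fin n) (Fin n) (RatFunc K))
    (Qt Rt : Matrix (Fin n) (Fin n) K[X]) (hQt : Qt.det ≠ 0)
    (hdesc : H * Qt.map (algebraMap K[X] (RatFunc K)) = Rt.map (algebraMap K[X] (RatFunc K)))
    (hQtdeg : ∀ i j, (Qt i j).degree ≤ (D : WithBot ℕ))
    (hRtdeg : ∀ i j, (Rt i j).degree < (D : WithBot ℕ))
    (M : K[X]) (hMdeg : ((2 * D : ℕ) : WithBot ℕ) ≤ M.degree)
    (hcop : IsCoprime M Qt.det)
    (Hbar : Matrix (Fin n) (Fin n) K[X])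
    (hHbar : ∀ i j, M ∣ ((H i j).denom * Hbar i j - (H i j).num))
    (q r : Fin n → K[X])
    (hq : ∀ i, (q i).degree ≤ (D : WithBot ℕ))
    (hr : ∀ i, (r i).degree < (D : WithBot ℕ))
    (hdvd : ∀ j, M ∣ ((q ᵥ* Hbar) j - r j)) :
    (fun i => algebraMap K[X] (RatFunc K) (q i)) ᵥ* H
      = fun j => algebraMap K[X] (RatFunc K) (r j) := by
  set φ := algebraMap K[X] (RatFunc K)
  have hdetφ : (Qt.map φ).det = φ Qt.det := (φ.map_det Qt).symm
  have hdetH (i j) : φ Qt.det * H i j = φ ((Rt * Qt.adjugate) i j) := by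
    have := det_smul_eq_mul_adjugate_of_mul_eq hdesc
    rw [← φ.map_mul_adjugate, hdetφ] at this
    simpa using congrFun₂ this i j
  have hpoly : q ᵥ* Rt = r ᵥ* Qt := by
    funext j
    have hM : M ∣ (q ᵥ* Rt) j - (r ᵥ* Qt) j := dvd_vecMul_sub_vecMul hcop
      (fun i j => RatFunc.dvd_mul_sub_of_algebraMap_mul_eq (hdetH i j) hcop (hHbar i j)) hdvd j
    exact sub_eq_zero.mp <| eq_zero_of_dvd_of_degree_lt hM <|
      (degree_vecMul_sub_vecMul_lt hq hr hRtdeg hQtdeg j).trans_le hMdeg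
  have hφdet : IsUnit (Qt.map φ).det := by
    rw [hdetφ]
    exact (RatFunc.algebraMap_ne_zero hQt).isUnit
  refine (vecMul_eq_iff_of_mul_eq hφdet hdesc _ _).mpr ?_
  funext j
  simpa [RingHom.map_vecMul, Function.comp_def] using congrArg φ (congrFun hpoly j)

/-- let `H ∈ K(x)^{n×n}` admit a right fraction description `H = R̃ Q̃⁻¹`
with `Q̃` nonsingular, `deg Q̃ ≤ D`, `deg R̃ < D`. Let `M` have degree at least `2D` and
be coprime to `det Q̃`, and let `H̄` be `H` reduced modulo `M` (each entry `a/b` replaced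
by `a·b⁻¹ mod M`). If `q, r` satisfy `deg q ≤ D`, `deg r < D`, and `M` divides every
entry of `q·H̄ − r`, then `q·H = r` over `K(x)`. -/
theorem stmt4 {K : Type*} [Field K] {n : ℕ} (D : ℕ) (hD : 0 < D)
    (H : Matrix (Fin n) (Fin n) (RatFunc K))
    (Qt Rt : Matrix (Fin n) (Fin n) K[X]) (hQt : Qt.det ≠ 0)
    (hdesc : H * Qt.map (algebraMap K[X] (RatFunc K)) = Rt.map (algebraMap K[X] (RatFunc K)))
    (hQtdeg : ∀ i j, (Qt i j).degree ≤ (D : WithBot ℕ))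
    (hRtdeg : ∀ i j, (Rt i j).degree < (D : WithBot ℕ))
    (M : K[X]) (hMdeg : ((2 * D : ℕ) : WithBot ℕ) ≤ M.degree)
    (hcop : IsCoprime M Qt.det)
    (Hbar : Matrix (Fin n) (Fin n) K[X])
    (hHbar : ∀ i j, M ∣ ((H i j).denom * Hbar i j - (H i j).num))
    (q r : Fin n → K[X])
    (hq : ∀ i, (q i).degree ≤ (D : WithBot ℕ))
    (hr : ∀ i, (r i).degree < (D : WithBot ℕ))
    (hdvd : ∀ j, M ∣ ((q ᵥ* Hbar) j - r j)) :
    (fun i => algebraMap K[X] (RatFunc K) (q i)) ᵥ* H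
      = fun j => algebraMap K[X] (RatFunc K) (r j) :=
  stmt4_general D H Qt Rt hQt hdesc hQtdeg hRtdeg M hMdeg hcop Hbar hHbar q r hq hr hdvd
end

section
/- Let K be a field, let E = (E_1,…,E_D) be matrices in K^{m×n}, and let α = (α_1,…,α_D) be pairwise distinct points of K. Fix 1 ≤ k < D. Let P_1 in K[x]^{m×m} be nonsingular with rows forming a K[x]-basis of I_{(α_1,…,α_k)}(E_1,…,E_k), define R_i = P_1(α_i)·E_i in K^{m×n} for k < i ≤ D, and let P_2 in K[x]^{m×m} be nonsingular with rows forming a K[x]-basis of I_{(α_{k+1},…,α_D)}(R_{k+1},…,R_D). Then the rows of the product P_2·P_1 form a K[x]-basis of I_α(E). -/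
/-!
Writing `f₁ : q ↦ q·P₁`, the hypothesis on `P₁` says `range f₁ = I₁`, the module for the
first `k` points, and since `(q·P₁)(αᵢ)·Eᵢ = q(αᵢ)·Rᵢ`, the hypothesis on `P₂` says that its
rows span `f₁⁻¹(I₂)`, the preimage of the module for the last points. Hence the rows of
`P₂·P₁` span `f₁(f₁⁻¹(I₂)) = I₁ ⊓ I₂ = I_α(E)`, and they are independent because
`q ↦ q·P₂·P₁` is the composite of two injective maps.
-/

open Polynomial Matrix

noncomputable section

/-- The module `I_α(E)` of row vectors `p ∈ K[x]^{1×m}` with `p(α_i)·E_i = 0` for all `i`. -/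
def intModule {K : Type*} [Field K] {m n D : ℕ} (α : Fin D → K)
    (E : Fin D → Matrix (Fin m) (Fin n) K) : Submodule K[X] (Fin m → K[X]) where
  carrier := {p | ∀ i, (fun k => (p k).eval (α i)) ᵥ* E i = 0}
  add_mem' := by
    intro p q hp hq i
    have h : (fun k => ((p + q) k).eval (α i))
        = (fun k => (p k).eval (α i)) + fun k => (q k).eval (α i) := by
      funext k; simp
    rw [h, Matrix.add_vecMul, hp i, hq i, add_zero]
  zero_mem' := by
    intro i
    have h : (fun k => ((0 : Fin m → K[X]) k).eval (α i)) = (0 : Fin m → K) := by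
      funext k; simp
    rw [h, Matrix.zero_vecMul]
  smul_mem' := by
    intro c p hp i
    have h : (fun k => ((c • p) k).eval (α i))
        = c.eval (α i) • fun k => (p k).eval (α i) := by
      funext k; simp
    rw [h, Matrix.smul_vecMul, hp i, smul_zero]

namespace Matrix

variable {R : Type*} [CommRing R] {m n : ℕ}

theorem span_rows_eq_range_vecMulLinear (M : Matrix (Fin m) (Fin n) R) :
    Submodule.span R (Set.range fun i => M i) = LinearMap.range M.vecMulLinear :=
  (range_vecMulLinear M).symm

theorem vecMulLinear_mul {o : ℕ} (M : Matrix (Fin m) (Fin n) R) (N : Matrix (Fin n) (Fin o) R) :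
    (M * N).vecMulLinear = N.vecMulLinear ∘ₗ M.vecMulLinear :=
  LinearMap.ext fun v => (vecMul_vecMul v M N).symm

end Matrix

section IsBasisOf

variable {K : Type*} [Field K] {m : ℕ}

theorem IsBasisOf.range_vecMulLinear {P : Matrix (Fin m) (Fin m) K[X]}
    {N : Submodule K[X] (Fin m → K[X])} (h : IsBasisOf (fun i => P i) N) :
    LinearMap.range P.vecMulLinear = N := by
  rw [← h.2, span_rows_eq_range_vecMulLinear]

theorem IsBasisOf.mul {P₁ P₂ : Matrix (Fin m) (Fin m) K[X]}
    {N₁ N₂ : Submodule K[X] (Fin m → K[X])} (h₁ : IsBasisOf (fun i => P₁ i) N₁)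
    (h₂ : IsBasisOf (fun i => P₂ i) (N₂.comap P₁.vecMulLinear)) :
    IsBasisOf (fun i => (P₂ * P₁) i) (N₁ ⊓ N₂) := by
  have hinj₁ : Function.Injective P₁.vecMul := vecMul_injective_iff.2 h₁.1
  have hinj₂ : Function.Injective P₂.vecMul := vecMul_injective_iff.2 h₂.1
  refine ⟨vecMul_injective_iff.1 ?_, ?_⟩
  · have hcomp : (P₂ * P₁).vecMul = P₁.vecMul ∘ P₂.vecMul :=
      funext fun v => (vecMul_vecMul v P₂ P₁).symm
    rw [hcomp]
    exact hinj₁.comp hinj₂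
  · rw [span_rows_eq_range_vecMulLinear, vecMulLinear_mul, LinearMap.range_comp,
      h₂.range_vecMulLinear, Submodule.map_comap_eq, h₁.range_vecMulLinear]

end IsBasisOf

section intModule

variable {K : Type*} [Field K] {m n : ℕ}

theorem mem_intModule_iff {D : ℕ} {α : Fin D → K} {E : Fin D → Matrix (Fin m) (Fin n) K}
    {p : Fin m → K[X]} :
    p ∈ intModule α E ↔ ∀ i, (fun k => (p k).eval (α i)) ᵥ* E i = 0 :=
  Iff.rfl

theorem intModule_append {k l : ℕ} (α : Fin (k + l) → K)
    (E : Fin (k + l) → Matrix (Fin m) (Fin n) K) :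
    intModule α E =
      intModule (fun i => α (Fin.castAdd l i)) (fun i => E (Fin.castAdd l i)) ⊓
        intModule (fun i => α (Fin.natAdd k i)) (fun i => E (Fin.natAdd k i)) := by
  ext p
  simp only [Submodule.mem_inf, mem_intModule_iff]
  exact Fin.forall_fin_add _

theorem eval_vecMul {m' : ℕ} (q : Fin m' → K[X]) (P : Matrix (Fin m') (Fin m) K[X]) (a : K) :
    (fun j => ((q ᵥ* P) j).eval a) = (fun i => (q i).eval a) ᵥ* P.map (eval a) :=
  funext fun j => RingHom.map_vecMul (evalRingHom a) P q j

theorem comap_vecMulLinear_intModule {D m' : ℕ} (α : Fin D → K)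
    (E : Fin D → Matrix (Fin m) (Fin n) K) (P : Matrix (Fin m') (Fin m) K[X]) :
    (intModule α E).comap P.vecMulLinear =
      intModule α (fun i => P.map (eval (α i)) * E i) := by
  ext q
  simp only [Submodule.mem_comap, vecMulLinear_apply, mem_intModule_iff, eval_vecMul,
    vecMul_vecMul]

end intModule

theorem stmt7_general {K : Type*} [Field K] {m n k l : ℕ}
    (α : Fin (k + l) → K)
    (E : Fin (k + l) → Matrix (Fin m) (Fin n) K)
    (P₁ P₂ : Matrix (Fin m) (Fin m) K[X])
    (hP₁basis : IsBasisOf (fun i => P₁ i)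
      (intModule (fun i : Fin k => α (Fin.castAdd l i))
        (fun i : Fin k => E (Fin.castAdd l i))))
    (hP₂basis : IsBasisOf (fun i => P₂ i)
      (intModule (fun i : Fin l => α (Fin.natAdd k i))
        (fun i : Fin l =>
          P₁.map (Polynomial.eval (α (Fin.natAdd k i))) * E (Fin.natAdd k i)))) :
    IsBasisOf (fun i => (P₂ * P₁) i) (intModule α E) := by
  rw [← comap_vecMulLinear_intModule] at hP₂basis
  rw [intModule_append]
  exact hP₁basis.mul hP₂basis

/-- with `D = k + l` points (`1 ≤ k`, `1 ≤ l`, so `1 ≤ k < D`), if the rows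
of the nonsingular `P₁` form a basis of the interpolant module for the first `k` points,
`R_i = P₁(α_i)·E_i` for the last `l` points, and the rows of the nonsingular `P₂` form a
basis of the interpolant module for `(R_i)` at the last `l` points, then the rows of
`P₂·P₁` form a basis of `I_α(E)`. -/
theorem stmt7 {K : Type*} [Field K] {m n k l : ℕ} (hk : 0 < k) (hl : 0 < l)
    (α : Fin (k + l) → K) (hα : Function.Injective α)
    (E : Fin (k + l) → Matrix (Fin m) (Fin n) K)
    (P₁ P₂ : Matrix (Fin m) (Fin m) K[X])
    (hP₁ : P₁.det ≠ 0) (hP₂ : P₂.det ≠ 0)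
    (hP₁basis : IsBasisOf (fun i => P₁ i)
      (intModule (fun i : Fin k => α (Fin.castAdd l i))
        (fun i : Fin k => E (Fin.castAdd l i))))
    (hP₂basis : IsBasisOf (fun i => P₂ i)
      (intModule (fun i : Fin l => α (Fin.natAdd k i))
        (fun i : Fin l =>
          P₁.map (Polynomial.eval (α (Fin.natAdd k i))) * E (Fin.natAdd k i)))) :
    IsBasisOf (fun i => (P₂ * P₁) i) (intModule α E) :=
  stmt7_general α E P₁ P₂ hP₁basis hP₂basis

end
end

section
/- Let K be a field, let F be in K[x]^{m×n}, and let σ and k be integers with 1 ≤ k < σ. Let P_1 in K[x]^{m×m} be nonsingular with rows forming a K[x]-basis of A_{x^k}(F), so that P_1·F ≡ x^k·G (mod x^σ) for some G in K[x]^{m×n}, and let P_2 in K[x]^{m×m} be nonsingular with rows forming a K[x]-basis of A_{x^{σ−k}}(G). Then the rows of P_2·P_1 form a K[x]-basis of A_{x^σ}(F). -/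
/-!
Write `x^σ = x^k · x^(σ-k)`. Every `p ∈ A_{x^σ}(F)` lies in `A_{x^k}(F)`, the row space of `P₁`,
so `p = q P₁`. Since `P₁ F ≡ x^k G (mod x^σ)`, we get `q P₁ F ≡ x^k (q G) (mod x^σ)`, and cancelling
`x^k` shows `q P₁ ∈ A_{x^σ}(F)` iff `q ∈ A_{x^(σ-k)}(G)`. Hence `A_{x^σ}(F) = A_{x^(σ-k)}(G) · P₁`,
the row space of `P₂ P₁`; its rows are independent because `v ↦ v P₂` and `v ↦ v P₁` are injective.
-/

open Polynomial Matrix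

noncomputable section

namespace Matrix

variable {R : Type*} [CommRing R] {l m n : Type*} [Fintype l] [Fintype m]

theorem linearIndependent_row_mul {A : Matrix l m R} {B : Matrix m n R}
    (hA : LinearIndependent R A.row) (hB : LinearIndependent R B.row) :
    LinearIndependent R (A * B).row := by
  rw [← vecMul_injective_iff] at hA hB ⊢
  intro x y hxy
  exact hA (hB (by simpa only [vecMul_vecMul] using hxy))

theorem span_row_mul (A : Matrix l m R) (B : Matrix m n R) :
    Submodule.span R (Set.range (A * B).row) =
      (Submodule.span R (Set.range A.row)).map B.vecMulLinear := by
  rw [← range_vecMulLinear, ← range_vecMulLinear, ← LinearMap.range_comp]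
  congr 1
  ext x : 1
  simp [vecMul_vecMul]

theorem dvd_vecMul_sub_vecMul_s8 {d : R} {A B : Matrix m n R} (h : ∀ i j, d ∣ A i j - B i j)
    (v : m → R) (j : n) : d ∣ (v ᵥ* A) j - (v ᵥ* B) j := by
  rw [← Pi.sub_apply, ← vecMul_sub]
  exact Finset.dvd_sum fun i _ => dvd_mul_of_dvd_right (h i j) _

end Matrix

section approxModule

variable {K : Type*} [Field K] {l m n : ℕ}

theorem mem_approxModule {M : K[X]} {F : Matrix (Fin m) (Fin n) K[X]} {p : Fin m → K[X]} :
    p ∈ approxModule M F ↔ ∀ j, M ∣ (p ᵥ* F) j :=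
  Iff.rfl

theorem approxModule_anti {M N : K[X]} (h : M ∣ N) (F : Matrix (Fin m) (Fin n) K[X]) :
    approxModule N F ≤ approxModule M F :=
  fun _ hp j => h.trans (hp j)

theorem vecMul_mem_approxModule_mul_iff {a b : K[X]} (ha : a ≠ 0)
    {F : Matrix (Fin m) (Fin n) K[X]} {P : Matrix (Fin l) (Fin m) K[X]}
    {G : Matrix (Fin l) (Fin n) K[X]} (hG : ∀ i j, a * b ∣ (P * F) i j - a * G i j)
    (q : Fin l → K[X]) :
    q ᵥ* P ∈ approxModule (a * b) F ↔ q ∈ approxModule b G := by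
  simp only [mem_approxModule]
  refine forall_congr' fun j => ?_
  have hcongr := dvd_vecMul_sub_vecMul_s8 (B := a • G) hG q j
  rw [vecMul_vecMul, dvd_iff_dvd_of_dvd_sub hcongr, vecMul_smul, Pi.smul_apply, smul_eq_mul,
    mul_dvd_mul_iff_left ha]

theorem approxModule_mul_eq_map {a b : K[X]} (ha : a ≠ 0) {F : Matrix (Fin m) (Fin n) K[X]}
    {P : Matrix (Fin l) (Fin m) K[X]} {G : Matrix (Fin l) (Fin n) K[X]}
    (hP : Submodule.span K[X] (Set.range P.row) = approxModule a F)
    (hG : ∀ i j, a * b ∣ (P * F) i j - a * G i j) :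
    approxModule (a * b) F = (approxModule b G).map P.vecMulLinear := by
  ext p
  constructor
  · intro hp
    have hpa := approxModule_anti (dvd_mul_right a b) F hp
    rw [← hP, ← range_vecMulLinear] at hpa
    obtain ⟨q, rfl⟩ := hpa
    exact ⟨q, (vecMul_mem_approxModule_mul_iff ha hG q).1 hp, rfl⟩
  · rintro ⟨q, hq, rfl⟩
    exact (vecMul_mem_approxModule_mul_iff ha hG q).2 hq

end approxModule

theorem stmt8_general {K : Type*} [Field K] {m n : ℕ} (F : Matrix (Fin m) (Fin n) K[X])
    (σ k : ℕ) (hkσ : k < σ)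
    (P₁ P₂ : Matrix (Fin m) (Fin m) K[X])
    (hP₁basis : IsBasisOf (fun i => P₁ i) (approxModule (X ^ k) F))
    (G : Matrix (Fin m) (Fin n) K[X])
    (hG : ∀ i j, (X : K[X]) ^ σ ∣ ((P₁ * F) i j - X ^ k * G i j))
    (hP₂basis : IsBasisOf (fun i => P₂ i) (approxModule (X ^ (σ - k)) G)) :
    IsBasisOf (fun i => (P₂ * P₁) i) (approxModule (X ^ σ) F) := by
  have hsplit : (X : K[X]) ^ σ = X ^ k * X ^ (σ - k) := by
    rw [← pow_add, Nat.add_sub_cancel' hkσ.le]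
  refine ⟨linearIndependent_row_mul hP₂basis.1 hP₁basis.1, ?_⟩
  rw [hsplit, approxModule_mul_eq_map (pow_ne_zero k X_ne_zero) hP₁basis.2 (hsplit ▸ hG),
    ← hP₂basis.2]
  exact span_row_mul P₂ P₁

/-- let `1 ≤ k < σ`, let the rows of the nonsingular `P₁` form a basis of
`A_{x^k}(F)`, let `G` be such that `P₁·F ≡ x^k·G (mod x^σ)`, and let the rows of the
nonsingular `P₂` form a basis of `A_{x^{σ-k}}(G)`. Then the rows of `P₂·P₁` form a
basis of `A_{x^σ}(F)`. -/
theorem stmt8 {K : Type*} [Field K] {m n : ℕ} (F : Matrix (Fin m) (Fin n) K[X])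
    (σ k : ℕ) (hk : 1 ≤ k) (hkσ : k < σ)
    (P₁ P₂ : Matrix (Fin m) (Fin m) K[X]) (hP₁ : P₁.det ≠ 0) (hP₂ : P₂.det ≠ 0)
    (hP₁basis : IsBasisOf (fun i => P₁ i) (approxModule (X ^ k) F))
    (G : Matrix (Fin m) (Fin n) K[X])
    (hG : ∀ i j, (X : K[X]) ^ σ ∣ ((P₁ * F) i j - X ^ k * G i j))
    (hP₂basis : IsBasisOf (fun i => P₂ i) (approxModule (X ^ (σ - k)) G)) :
    IsBasisOf (fun i => (P₂ * P₁) i) (approxModule (X ^ σ) F) :=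
  stmt8_general F σ k hkσ P₁ P₂ hP₁basis G hG hP₂basis

end
end

section
/- Let K be a field and s ∈ ℤ^m. Let P_1 in K[x]^{m×m} be nonsingular and in s-ordered weak Popov form, let t = (t_1,…,t_m) ∈ ℤ^m where t_i is the s-degree of the i-th row of P_1, and let P_2 in K[x]^{m×m} be nonsingular and in t-ordered weak Popov form. Then P_2·P_1 is in s-ordered weak Popov form, and for each i the s-degree of the i-th row of P_2·P_1 equals the t-degree of the i-th row of P_2. -/
open Polynomial Matrix

noncomputable section

/-- A square polynomial matrix is in `s`-ordered weak Popov form if, for each `i`, the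
`s`-pivot of its `i`-th row (the rightmost entry `p_j` with `deg p_j + s_j` equal to the
`s`-degree of the row) is its `i`-th entry: entry `i` attains the `s`-degree of the row,
and every entry to the right of it has `deg + shift` smaller than the `s`-degree. -/
def IsOWP {K : Type*} [Field K] {m : ℕ} (s : Fin m → ℤ)
    (P : Matrix (Fin m) (Fin m) K[X]) : Prop :=
  ∀ i : Fin m,
    WithBot.map (fun d : ℕ => (d : ℤ) + s i) (P i i).degree = rdeg s (P i) ∧
    ∀ j : Fin m, i < j →
      WithBot.map (fun d : ℕ => (d : ℤ) + s j) (P i j).degree < rdeg s (P i)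

/-! Work row by row. If row `p` of `P₂` has its `t`-pivot at `i`, every term `p_k P₁_{kj}`
of `(p P₁)_j` has `s`-degree at most `deg p_k + t_k ≤ rdeg_t p`, and for `j ≥ i` strictly less
unless `k = j = i`: for `k > i` because `p` is below its row degree right of its pivot, and for
`k < j` because `P₁` is below its row degrees right of the diagonal. So the `(i, i)` term alone
attains `rdeg_t p`. -/

theorem WithBot.strictMono_map_natCast : StrictMono (WithBot.map ((↑) : ℕ → ℤ)) :=
  Nat.strictMono_cast.withBot_map

namespace Polynomial

variable {K : Type*} [Field K]

def zdegree (p : K[X]) : WithBot ℤ := p.degree.map ((↑) : ℕ → ℤ)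

theorem map_degree_add_const (c : ℤ) (p : K[X]) :
    WithBot.map (fun d : ℕ => (d : ℤ) + c) p.degree = zdegree p + c := by
  cases h : p.degree <;> simp [zdegree, h, ← WithBot.coe_add]

@[simp]
theorem zdegree_zero : zdegree (0 : K[X]) = ⊥ := rfl

theorem zdegree_eq_bot {p : K[X]} : zdegree p = ⊥ ↔ p = 0 := by
  simp [zdegree]

theorem zdegree_mul (p q : K[X]) : zdegree (p * q) = zdegree p + zdegree q := by
  simp only [zdegree, degree_mul]
  exact WithBot.map_add (Nat.castAddMonoidHom ℤ) _ _

theorem zdegree_add_le (p q : K[X]) : zdegree (p + q) ≤ max (zdegree p) (zdegree q) :=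
  (WithBot.strictMono_map_natCast.monotone (degree_add_le p q)).trans_eq
    WithBot.strictMono_map_natCast.monotone.map_max

theorem zdegree_add_add_eq_of_lt {p q : K[X]} {c : ℤ} {B : WithBot ℤ}
    (hp : zdegree p + c = B) (hq : zdegree q + c < B) : zdegree (p + q) + c = B := by
  rw [← hp, WithBot.add_lt_add_iff_right WithBot.coe_ne_bot] at hq
  have hdeg : q.degree < p.degree := WithBot.strictMono_map_natCast.lt_iff_lt.1 hq
  rw [zdegree, degree_add_eq_left_of_degree_lt hdeg, ← zdegree, hp]

variable {ι : Type*} (S : Finset ι) (f : ι → K[X]) (c : ℤ) {B : WithBot ℤ}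

theorem zdegree_sum_add_le (h : ∀ k ∈ S, zdegree (f k) + c ≤ B) :
    zdegree (∑ k ∈ S, f k) + c ≤ B :=
  Finset.sum_induction f (fun q => zdegree q + c ≤ B)
    (fun p q hp hq => (add_le_add_left (zdegree_add_le p q) _).trans
      (by rw [← max_add_add_right]; exact max_le hp hq))
    (by simp) h

theorem zdegree_sum_add_lt (hB : ⊥ < B) (h : ∀ k ∈ S, zdegree (f k) + c < B) :
    zdegree (∑ k ∈ S, f k) + c < B :=
  Finset.sum_induction f (fun q => zdegree q + c < B)
    (fun p q hp hq => (add_le_add_left (zdegree_add_le p q) _).trans_lt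
      (by rw [← max_add_add_right]; exact max_lt hp hq))
    (by simpa using hB) h

end Polynomial

section RowDegree

variable {K : Type*} [Field K] {m : ℕ}

theorem rdeg_eq_sup (s : Fin m → ℤ) (p : Fin m → K[X]) :
    rdeg s p = Finset.univ.sup fun j => (p j).zdegree + s j := by
  simp only [rdeg, Polynomial.map_degree_add_const]

theorem zdegree_add_le_rdeg (s : Fin m → ℤ) (p : Fin m → K[X]) (j : Fin m) :
    (p j).zdegree + s j ≤ rdeg s p := by
  rw [rdeg_eq_sup]
  exact Finset.le_sup (f := fun j => (p j).zdegree + (s j : WithBot ℤ)) (Finset.mem_univ j)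

def IsPivotIndex (s : Fin m → ℤ) (p : Fin m → K[X]) (i : Fin m) : Prop :=
  (p i).zdegree + s i = rdeg s p ∧ ∀ j, i < j → (p j).zdegree + s j < rdeg s p

theorem isOWP_iff (s : Fin m → ℤ) (P : Matrix (Fin m) (Fin m) K[X]) :
    IsOWP s P ↔ ∀ i, IsPivotIndex s (P i) i := by
  simp only [IsOWP, IsPivotIndex, Polynomial.map_degree_add_const]

variable {s t : Fin m → ℤ} {P : Matrix (Fin m) (Fin m) K[X]}

theorem zdegree_mul_entry_add_le (ht : ∀ k, (t k : WithBot ℤ) = rdeg s (P k)) (a : K[X])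
    (k j : Fin m) : (a * P k j).zdegree + s j ≤ a.zdegree + t k := by
  rw [Polynomial.zdegree_mul, add_assoc, ht k]
  exact add_le_add_right (zdegree_add_le_rdeg s (P k) j) _

theorem zdegree_mul_entry_add_lt (hP : IsOWP s P) (ht : ∀ k, (t k : WithBot ℤ) = rdeg s (P k))
    {a : K[X]} (ha : a ≠ 0) {k j : Fin m} (hkj : k < j) :
    (a * P k j).zdegree + s j < a.zdegree + t k := by
  rw [Polynomial.zdegree_mul, add_assoc, ht k]
  exact WithBot.add_lt_add_left (Polynomial.zdegree_eq_bot.not.2 ha)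
    (((isOWP_iff s P).1 hP k).2 j hkj)

theorem zdegree_mul_diag_add (hP : IsOWP s P) (ht : ∀ k, (t k : WithBot ℤ) = rdeg s (P k))
    (a : K[X]) (k : Fin m) : (a * P k k).zdegree + s k = a.zdegree + t k := by
  rw [Polynomial.zdegree_mul, add_assoc, ht k, ← ((isOWP_iff s P).1 hP k).1]

theorem IsPivotIndex.vecMul {p : Fin m → K[X]} {i : Fin m} (hp : IsPivotIndex t p i)
    (hP : IsOWP s P) (ht : ∀ k, (t k : WithBot ℤ) = rdeg s (P k)) :
    IsPivotIndex s (p ᵥ* P) i ∧ rdeg s (p ᵥ* P) = rdeg t p := by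
  set B := rdeg t p
  have term_le (k j : Fin m) : (p k * P k j).zdegree + s j ≤ B :=
    (zdegree_mul_entry_add_le ht _ k j).trans (zdegree_add_le_rdeg t p k)
  have term_lt (k j : Fin m) (hij : i ≤ j) (hne : k ≠ i ∨ j ≠ i) (hB : ⊥ < B) :
      (p k * P k j).zdegree + s j < B := by
    rcases lt_or_ge i k with hik | hki
    · exact (zdegree_mul_entry_add_le ht _ k j).trans_lt (hp.2 k hik)
    by_cases hpk : p k = 0
    · simpa [hpk] using hB
    have hkj : k < j := by
      rcases hne with hne | hne
      · exact (lt_of_le_of_ne hki hne).trans_le hij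
      · exact hki.trans_lt (lt_of_le_of_ne hij hne.symm)
    exact (zdegree_mul_entry_add_lt hP ht hpk hkj).trans_le (zdegree_add_le_rdeg t p k)
  have entry_le (j : Fin m) : ((p ᵥ* P) j).zdegree + s j ≤ B := by
    rw [Matrix.vecMul_apply_eq_sum]
    exact Polynomial.zdegree_sum_add_le _ _ _ fun k _ => term_le k j
  have entry_lt (j : Fin m) (hij : i < j) : ((p ᵥ* P) j).zdegree + s j < B := by
    have hB : ⊥ < B := bot_le.trans_lt (hp.2 j hij)
    rw [Matrix.vecMul_apply_eq_sum]
    exact Polynomial.zdegree_sum_add_lt _ _ _ hB fun k _ => term_lt k j hij.le (Or.inr hij.ne') hB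
  have entry_eq : ((p ᵥ* P) i).zdegree + s i = B := by
    rcases eq_bot_or_bot_lt B with hB | hB
    · exact le_antisymm (entry_le i) (hB ▸ bot_le)
    rw [Matrix.vecMul_apply_eq_sum, ← Finset.add_sum_erase _ _ (Finset.mem_univ i)]
    refine Polynomial.zdegree_add_add_eq_of_lt ((zdegree_mul_diag_add hP ht _ i).trans hp.1) ?_
    exact Polynomial.zdegree_sum_add_lt _ _ _ hB fun k hk =>
      term_lt k i le_rfl (Or.inl (Finset.ne_of_mem_erase hk)) hB
  have hrdeg : rdeg s (p ᵥ* P) = B :=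
    le_antisymm ((rdeg_eq_sup s _).trans_le (Finset.sup_le fun j _ => entry_le j))
      (entry_eq ▸ zdegree_add_le_rdeg s _ i)
  exact ⟨⟨entry_eq.trans hrdeg.symm, fun j hij => hrdeg ▸ entry_lt j hij⟩, hrdeg⟩

end RowDegree

theorem stmt9_general {K : Type*} [Field K] {m : ℕ} (s t : Fin m → ℤ)
    (P₁ P₂ : Matrix (Fin m) (Fin m) K[X])
    (hP₁owp : IsOWP s P₁) (hP₂owp : IsOWP t P₂)
    (ht : ∀ i, ((t i : ℤ) : WithBot ℤ) = rdeg s (P₁ i)) :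
    IsOWP s (P₂ * P₁) ∧ ∀ i, rdeg s ((P₂ * P₁) i) = rdeg t (P₂ i) := by
  have hrow (i : Fin m) :
      IsPivotIndex s ((P₂ * P₁) i) i ∧ rdeg s ((P₂ * P₁) i) = rdeg t (P₂ i) :=
    ((isOWP_iff t P₂).1 hP₂owp i).vecMul hP₁owp ht
  exact ⟨(isOWP_iff s _).2 fun i => (hrow i).1, fun i => (hrow i).2⟩

/-- if `P₁` is nonsingular in `s`-ordered weak Popov form, `t_i` is the
`s`-degree of the `i`-th row of `P₁`, and `P₂` is nonsingular in `t`-ordered weak Popov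
form, then `P₂·P₁` is in `s`-ordered weak Popov form, and the `s`-degree of its `i`-th
row is the `t`-degree of the `i`-th row of `P₂`. -/
theorem stmt9 {K : Type*} [Field K] {m : ℕ} (s t : Fin m → ℤ)
    (P₁ P₂ : Matrix (Fin m) (Fin m) K[X])
    (hP₁ : P₁.det ≠ 0) (hP₂ : P₂.det ≠ 0)
    (hP₁owp : IsOWP s P₁) (hP₂owp : IsOWP t P₂)
    (ht : ∀ i, ((t i : ℤ) : WithBot ℤ) = rdeg s (P₁ i)) :
    IsOWP s (P₂ * P₁) ∧ ∀ i, rdeg s ((P₂ * P₁) i) = rdeg t (P₂ i) :=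
  stmt9_general s t P₁ P₂ hP₁owp hP₂owp ht

end
end

section
/- Let K be a field, let P in K[z] be monic of degree n ≥ 1, and let A be in K[z]. Then the characteristic polynomial (in the variable x) of the K-linear endomorphism of K[z]/(P) given by multiplication by the residue class of A equals, up to multiplication by a nonzero constant of K, the resultant with respect to z of the polynomials x − A(z) and P(z), viewed as polynomials in z with coefficients in K[x]. -/
/-! Let `g` be monic of degree `n` and `deg f ≤ m`. Subtracting from the Sylvester column of
`f * X ^ j` the columns of `g * X ^ k`, weighted by the coefficients of the quotient of
`f * X ^ j` by `g`, leaves the coefficients of `f * X ^ j %ₘ g`. This unipotent column operation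
makes the Sylvester matrix block upper triangular, with the matrix of multiplication by `f` on
`R[X] ⧸ (g)` and a unitriangular block on the diagonal. For `f = x - A` and `g = P` over `K[x]`
the first block is `x - M_A`, the characteristic matrix of multiplication by `A`, so the
resultant is the characteristic polynomial itself (`c = 1`). -/

open Polynomial Matrix

noncomputable section

/-- The Sylvester matrix of two polynomials `f, g ∈ R[z]` with respect to the formal
degrees `m` (for `f`) and `n` (for `g`): an `(n+m)×(n+m)` matrix whose first `n`
columns carry the shifted coefficients of `f` and whose last `m` columns carry the
shifted coefficients of `g`. Its determinant is the resultant of `f` and `g`. -/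
def sylvester {R : Type*} [CommRing R] (f g : Polynomial R) (m n : ℕ) :
    Matrix (Fin (n + m)) (Fin (n + m)) R :=
  Matrix.of fun i j =>
    Fin.addCases (motive := fun _ => R)
      (fun j₁ : Fin n => if (j₁ : ℕ) ≤ (i : ℕ) then f.coeff ((i : ℕ) - (j₁ : ℕ)) else 0)
      (fun j₂ : Fin m => if (j₂ : ℕ) ≤ (i : ℕ) then g.coeff ((i : ℕ) - (j₂ : ℕ)) else 0) j

section

variable {R : Type*} [CommRing R]

def mulModMatrix (f g : R[X]) (n : ℕ) : Matrix (Fin n) (Fin n) R :=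
  Matrix.of fun i j => ((f * X ^ (j : ℕ)) %ₘ g).coeff i

def coeffMatrix {κ ι : Type*} (r : κ → ℕ) (v : ι → R[X]) : Matrix κ ι R :=
  Matrix.of fun i c => (v c).coeff (r i)

theorem coeffMatrix_mul {κ ι : Type*} [Fintype ι] (r : κ → ℕ) (v : ι → R[X])
    (M : Matrix ι ι R) :
    coeffMatrix r v * M = coeffMatrix r fun c => ∑ c', M c' c • v c' := by
  ext i c
  simp [coeffMatrix, Matrix.mul_apply, mul_comm]

theorem sylvester_apply_castAdd (f g : R[X]) (m n : ℕ) (i : Fin (n + m)) (j : Fin n) :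
    _root_.sylvester f g m n i (Fin.castAdd m j) = (f * X ^ (j : ℕ)).coeff i := by
  simp [_root_.sylvester, coeff_mul_X_pow']

theorem sylvester_apply_natAdd (f g : R[X]) (m n : ℕ) (i : Fin (n + m)) (k : Fin m) :
    _root_.sylvester f g m n i (Fin.natAdd n k) = (g * X ^ (k : ℕ)).coeff i := by
  simp [_root_.sylvester, coeff_mul_X_pow']

theorem sylvester_submatrix_finSumFinEquiv (f g : R[X]) (m n : ℕ) :
    (_root_.sylvester f g m n).submatrix finSumFinEquiv finSumFinEquiv =
      coeffMatrix (fun i => (finSumFinEquiv i : ℕ))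
        (Sum.elim (fun j : Fin n => f * X ^ (j : ℕ)) fun k : Fin m => g * X ^ (k : ℕ)) := by
  ext (i | i) (j | k) <;>
    simp [coeffMatrix, sylvester_apply_castAdd, sylvester_apply_natAdd]

theorem mul_eq_sum_fin_smul_mul_X_pow (g : R[X]) {q : R[X]} {m : ℕ} (hq : q.degree < m) :
    g * q = ∑ k : Fin m, q.coeff k • (g * X ^ (k : ℕ)) := by
  conv_lhs => rw [← sum_C_mul_X_pow_eq q, ← sum_fin _ (by simp) hq, Finset.mul_sum]
  exact Finset.sum_congr rfl fun k _ => by rw [smul_eq_C_mul]; ring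

theorem degree_divByMonic_mul_X_pow_lt {f g : R[X]} {m n : ℕ} (hg : g.Monic)
    (hgn : g.natDegree = n) (hf : f.natDegree ≤ m) {j : ℕ} (hj : j < n) :
    ((f * X ^ j) /ₘ g).degree < m := by
  nontriviality R
  have hdeg : (f * X ^ j).natDegree ≤ m + j :=
    natDegree_mul_le.trans (by rw [natDegree_X_pow]; omega)
  by_cases hq : (f * X ^ j) /ₘ g = 0
  · simp [hq]
  have hge : n ≤ (f * X ^ j).natDegree := by
    rw [← hgn]
    exact natDegree_le_natDegree (not_lt.mp (mt (divByMonic_eq_zero_iff hg).mpr hq))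
  rw [degree_eq_natDegree hq, Nat.cast_lt, natDegree_divByMonic _ hg]
  omega

variable {f g : R[X]} {m n : ℕ}

theorem det_of_coeff_mul_X_pow_add_eq_one (hg : g.Monic) (hgn : g.natDegree = n) :
    (Matrix.of fun i k : Fin m => (g * X ^ (k : ℕ)).coeff (n + i)).det = 1 := by
  have hupper :
      (Matrix.of fun i k : Fin m => (g * X ^ (k : ℕ)).coeff (n + i)).IsUpperTriangular := by
    intro i k (hki : (k : ℕ) < i)
    rw [of_apply, coeff_mul_X_pow', if_pos (by omega)]
    exact coeff_eq_zero_of_natDegree_lt (by omega)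
  rw [det_of_isUpperTriangular hupper]
  refine Finset.prod_eq_one fun i _ => ?_
  rw [of_apply, coeff_mul_X_pow', if_pos (by omega), Nat.add_sub_cancel, ← hgn]
  exact hg.coeff_natDegree

theorem add_sum_smul_mul_X_pow_eq_modByMonic (hg : g.Monic) (hgn : g.natDegree = n)
    (hf : f.natDegree ≤ m) {j : ℕ} (hj : j < n) :
    f * X ^ j + ∑ k : Fin m, (-((f * X ^ j) /ₘ g).coeff k) • (g * X ^ (k : ℕ)) =
      (f * X ^ j) %ₘ g := by
  rw [modByMonic_eq_sub_mul_div (f * X ^ j) g,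
    mul_eq_sum_fin_smul_mul_X_pow g (degree_divByMonic_mul_X_pow_lt hg hgn hf hj)]
  simp only [neg_smul, Finset.sum_neg_distrib, sub_eq_add_neg]

theorem sylvester_submatrix_mul_fromBlocks (hg : g.Monic) (hgn : g.natDegree = n)
    (hf : f.natDegree ≤ m) :
    (_root_.sylvester f g m n).submatrix finSumFinEquiv finSumFinEquiv *
        fromBlocks (1 : Matrix (Fin n) (Fin n) R) 0
          (Matrix.of fun (k : Fin m) (j : Fin n) => -((f * X ^ (j : ℕ)) /ₘ g).coeff k) 1 =
      coeffMatrix (fun i => (finSumFinEquiv i : ℕ))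
        (Sum.elim (fun j : Fin n => (f * X ^ (j : ℕ)) %ₘ g)
          fun k : Fin m => g * X ^ (k : ℕ)) := by
  rw [sylvester_submatrix_finSumFinEquiv, coeffMatrix_mul]
  congr 1
  ext1 (j | k)
  · simpa [Fintype.sum_sum_type, Matrix.one_apply] using
      add_sum_smul_mul_X_pow_eq_modByMonic hg hgn hf j.isLt
  · simp [Fintype.sum_sum_type, Matrix.one_apply]

theorem det_coeffMatrix_modByMonic (hg : g.Monic) (hgn : g.natDegree = n) :
    (coeffMatrix (fun i => (finSumFinEquiv i : ℕ))
        (Sum.elim (fun j : Fin n => (f * X ^ (j : ℕ)) %ₘ g)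
          fun k : Fin m => g * X ^ (k : ℕ))).det =
      (mulModMatrix f g n).det := by
  nontriviality R
  have hblocks : coeffMatrix (fun i => (finSumFinEquiv i : ℕ))
        (Sum.elim (fun j : Fin n => (f * X ^ (j : ℕ)) %ₘ g)
          fun k : Fin m => g * X ^ (k : ℕ)) =
      fromBlocks (mulModMatrix f g n)
        (Matrix.of fun (i : Fin n) (k : Fin m) => (g * X ^ (k : ℕ)).coeff i) 0
        (Matrix.of fun i k : Fin m => (g * X ^ (k : ℕ)).coeff (n + i)) := by
    ext (i | i) (j | k)
    · rfl
    · rfl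
    · refine coeff_eq_zero_of_degree_lt ((degree_modByMonic_lt _ hg).trans_le ?_)
      rw [degree_eq_natDegree hg.ne_zero, hgn]
      exact_mod_cast Nat.le_add_right n i
    · rfl
  rw [hblocks, det_fromBlocks_zero₂₁, det_of_coeff_mul_X_pow_add_eq_one hg hgn, mul_one]

theorem det_sylvester_eq_det_mulModMatrix (hg : g.Monic) (hgn : g.natDegree = n)
    (hf : f.natDegree ≤ m) : (_root_.sylvester f g m n).det = (mulModMatrix f g n).det := by
  rw [← det_submatrix_equiv_self finSumFinEquiv, ← det_coeffMatrix_modByMonic hg hgn,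
    ← sylvester_submatrix_mul_fromBlocks hg hgn hf, det_mul, det_fromBlocks_zero₁₂]
  simp

theorem toMatrix_mulLeft_mk_eq_mulModMatrix (hg : g.Monic) (f : R[X]) :
    LinearMap.toMatrix (AdjoinRoot.powerBasisAux' hg) (AdjoinRoot.powerBasisAux' hg)
        (LinearMap.mulLeft R (AdjoinRoot.mk g f)) = mulModMatrix f g g.natDegree := by
  ext i j
  have hbasis : AdjoinRoot.powerBasisAux' hg j = AdjoinRoot.mk g (X ^ (j : ℕ)) :=
    ((AdjoinRoot.powerBasis' hg).basis_eq_pow j).trans (by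
      rw [AdjoinRoot.powerBasis'_gen, map_pow, AdjoinRoot.mk_X])
  rw [LinearMap.toMatrix_apply, hbasis, LinearMap.mulLeft_apply, ← map_mul,
    AdjoinRoot.powerBasisAux'_repr_apply_to_fun, AdjoinRoot.modByMonicHom_mk]
  rfl

theorem mulModMatrix_map_C_X_sub (hg : g.Monic) (f : R[X]) :
    mulModMatrix (C X - f.map C) (g.map C) g.natDegree =
      charmatrix (mulModMatrix f g g.natDegree) := by
  nontriviality R
  ext i j
  have hX : (C X * X ^ (j : ℕ)) %ₘ g.map C = C X * X ^ (j : ℕ) := by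
    rw [modByMonic_eq_self_iff (hg.map C), degree_map_eq_of_injective C_injective,
      degree_eq_natDegree hg.ne_zero, degree_C_mul_X_pow _ X_ne_zero]
    exact_mod_cast j.isLt
  have hrem : ((C X - f.map C) * X ^ (j : ℕ)) %ₘ g.map C =
      C X * X ^ (j : ℕ) - ((f * X ^ (j : ℕ)) %ₘ g).map C := by
    rw [sub_mul, sub_modByMonic, hX, map_modByMonic _ hg, Polynomial.map_mul, Polynomial.map_pow,
      map_X]
  rw [mulModMatrix, of_apply, hrem, coeff_sub, coeff_C_mul_X_pow, coeff_map, charmatrix_apply,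
    diagonal_apply, mulModMatrix, of_apply]
  simp [Fin.val_eq_val]

end

theorem stmt13_general {K : Type*} [Field K] (P : Polynomial K) (hP : P.Monic)
    (A : Polynomial K) :
    ∃ c : K, c ≠ 0 ∧
      Matrix.charpoly
          ((LinearMap.toMatrix (AdjoinRoot.powerBasis hP.ne_zero).basis
              (AdjoinRoot.powerBasis hP.ne_zero).basis)
            (LinearMap.mulLeft K (AdjoinRoot.mk P A)))
        = Polynomial.C c *
            (_root_.sylvester (Polynomial.C Polynomial.X - A.map Polynomial.C)
                (P.map Polynomial.C) A.natDegree P.natDegree).det := by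
  have hdeg : (C X - A.map C).natDegree ≤ A.natDegree :=
    (natDegree_sub_le _ _).trans (by simp)
  have := hP.finite_adjoinRoot
  refine ⟨1, one_ne_zero, ?_⟩
  rw [C_1, one_mul, LinearMap.charpoly_toMatrix,
    ← LinearMap.charpoly_toMatrix _ (AdjoinRoot.powerBasisAux' hP),
    toMatrix_mulLeft_mk_eq_mulModMatrix, Matrix.charpoly, ← mulModMatrix_map_C_X_sub hP,
    det_sylvester_eq_det_mulModMatrix (hP.map C) (hP.natDegree_map C) hdeg]

/-- for `P ∈ K[z]` monic of degree `n ≥ 1` and `A ∈ K[z]`, the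
characteristic polynomial (in `x`) of the `K`-linear endomorphism of `K[z]/(P)` given
by multiplication by the class of `A` equals, up to a nonzero constant of `K`, the
resultant with respect to `z` of `x − A(z)` and `P(z)`, viewed via `(K[x])[z]`. -/
theorem stmt13 {K : Type*} [Field K] (P : Polynomial K) (hP : P.Monic)
    (hn : 1 ≤ P.natDegree) (A : Polynomial K) :
    ∃ c : K, c ≠ 0 ∧
      Matrix.charpoly
          ((LinearMap.toMatrix (AdjoinRoot.powerBasis hP.ne_zero).basis
              (AdjoinRoot.powerBasis hP.ne_zero).basis)
            (LinearMap.mulLeft K (AdjoinRoot.mk P A)))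
        = Polynomial.C c *
            (_root_.sylvester (Polynomial.C Polynomial.X - A.map Polynomial.C)
                (P.map Polynomial.C) A.natDegree P.natDegree).det :=
  stmt13_general P hP A

end
end

section
/- Let K be a field and let F be in K^{m×n} (a constant matrix). Then A_x(F) = {p ∈ K[x]^{1×m} : p(0)·F = 0} is a free K[x]-module of rank m, and every matrix P in K[x]^{m×m} whose rows form a K[x]-basis of A_x(F) satisfies deg det(P) = rank(F). -/
/-!
Evaluating at `0` identifies `A_x(F)` with the vectors `p` whose constant term `p(0)` lies in
the left kernel `W` of `F`. Choose a basis `u` of `K^m` such that `u i`, `i ∈ s`, is a basis of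
`W`. The rows `u i` (`i ∈ s`) and `X • u i` (`i ∉ s`) then form a `K[X]`-basis of `A_x(F)`: a
vector `p = p(0) + X • p.divX` splits into a part in the span of the first rows and a part in
`X • K[X]^m`, which is spanned because each `X • u i` is a multiple of a row. The determinant
of this basis is `X ^ (m - dim W)` times the unit `det u`, of degree `rank F`. Two square
matrices whose rows span the same module have associated determinants, which gives the degree
for every basis.
-/

open Polynomial Matrix

noncomputable section

open Module Submodule Finset

namespace Matrix

variable {R ι : Type*} [CommRing R] [Fintype ι] [DecidableEq ι]

theorem det_dvd_det_of_rows_mem_span {P Q : Matrix ι ι R}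
    (h : ∀ i, P i ∈ span R (Set.range Q)) : Q.det ∣ P.det := by
  choose c hc using fun i => (mem_span_range_iff_exists_fun R).1 (h i)
  have hPQ : P = of c * Q := by
    ext i j
    simp [← hc i, mul_apply, Finset.sum_apply]
  rw [hPQ, det_mul]
  exact dvd_mul_left _ _

theorem det_associated_of_span_rows_eq [IsDomain R] {P Q : Matrix ι ι R}
    (h : span R (Set.range P) = span R (Set.range Q)) : Associated P.det Q.det :=
  associated_of_dvd_dvd
    (det_dvd_det_of_rows_mem_span fun i => h ▸ subset_span ⟨i, rfl⟩)
    (det_dvd_det_of_rows_mem_span fun i => h.symm ▸ subset_span ⟨i, rfl⟩)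

end Matrix

theorem Module.Basis.exists_span_image_eq {K V ι : Type*} [Field K] [AddCommGroup V] [Module K V]
    [Fintype ι] (b : Basis ι K V) (W : Submodule K V) :
    ∃ (u : Basis ι K V) (s : Finset ι), span K (u '' s) = W ∧ #s = finrank K W := by
  have := Module.Finite.of_basis b
  obtain ⟨W', hW⟩ := W.exists_isCompl
  let u := ((finBasis K W).prod (finBasis K W')).map (prodEquivOfIsCompl W W' hW)
  let e := u.indexEquiv b
  refine ⟨u.reindex e, univ.map (Function.Embedding.inl.trans e.toEmbedding), ?_, by simp⟩
  have : (u.reindex e) '' (univ.map (Function.Embedding.inl.trans e.toEmbedding) : Set ι) =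
      W.subtype '' Set.range (finBasis K W) := by
    ext v
    simp [u]
  rw [this, span_image, (finBasis K W).span_eq, map_subtype_top]

theorem Module.Basis.isUnit_det_of {R ι : Type*} [CommRing R] [Fintype ι] [DecidableEq ι]
    (u : Basis ι R (ι → R)) : IsUnit (of ⇑u).det := by
  rw [← Pi.basisFun_det_apply]
  exact (Pi.basisFun R ι).isUnit_det u

section AdaptedMatrix

variable {K ι : Type*} [Field K] [DecidableEq ι] (u : Basis ι K (ι → K)) (s : Finset ι)

def adaptedMatrix : Matrix ι ι K[X] :=
  of fun i j => (if i ∈ s then 1 else X) * C (u i j)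

theorem adaptedMatrix_eq_smul (i : ι) :
    adaptedMatrix u s i = (if i ∈ s then 1 else X : K[X]) • (C ∘ u i) := by
  funext j
  simp [adaptedMatrix]

theorem adaptedMatrix_mem_span (i : ι) :
    adaptedMatrix u s i ∈ span K[X] (Set.range (adaptedMatrix u s)) :=
  subset_span ⟨i, rfl⟩

theorem C_comp_mem_span_adaptedMatrix {v : ι → K} (hv : v ∈ span K (u '' s)) :
    C ∘ v ∈ span K[X] (Set.range (adaptedMatrix u s)) := by
  refine span_le (p := ((span K[X] _).restrictScalars K).comap
    ((Algebra.linearMap K K[X]).compLeft ι)).2 ?_ hv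
  rintro _ ⟨i, hi, rfl⟩
  show C ∘ u i ∈ span K[X] (Set.range (adaptedMatrix u s))
  simpa [adaptedMatrix_eq_smul, Finset.mem_coe.1 hi] using adaptedMatrix_mem_span u s i

theorem X_smul_C_comp_mem_span_adaptedMatrix (v : ι → K) :
    (X : K[X]) • (C ∘ v) ∈ span K[X] (Set.range (adaptedMatrix u s)) := by
  suffices ⊤ ≤ ((span K[X] _).restrictScalars K).comap
      ((X : K[X]) • (Algebra.linearMap K K[X]).compLeft ι) from this mem_top
  rw [← u.span_eq, span_le]
  rintro _ ⟨i, rfl⟩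
  show (X : K[X]) • (C ∘ u i) ∈ span K[X] (Set.range (adaptedMatrix u s))
  by_cases hi : i ∈ s
  · simpa [adaptedMatrix_eq_smul, hi] using smul_mem _ X (adaptedMatrix_mem_span u s i)
  · simpa [adaptedMatrix_eq_smul, hi] using adaptedMatrix_mem_span u s i

variable [Fintype ι]

theorem X_smul_mem_span_adaptedMatrix (q : ι → K[X]) :
    (X : K[X]) • q ∈ span K[X] (Set.range (adaptedMatrix u s)) := by
  suffices ⊤ ≤ (span K[X] (Set.range (adaptedMatrix u s))).comap ((X : K[X]) • LinearMap.id)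
    from this mem_top
  rw [← (Pi.basisFun K[X] ι).span_eq, span_le]
  rintro _ ⟨j, rfl⟩
  have : C ∘ Pi.single j (1 : K) = Pi.single j 1 := by
    funext k
    simp [Pi.single_apply, apply_ite C]
  simpa [this] using X_smul_C_comp_mem_span_adaptedMatrix u s (Pi.single j 1)

theorem span_adaptedMatrix_eq {N : Submodule K[X] (ι → K[X])}
    (hN : ∀ p, p ∈ N ↔ (fun i => (p i).eval 0) ∈ span K (u '' s)) :
    span K[X] (Set.range (adaptedMatrix u s)) = N := by
  refine le_antisymm (span_le.2 ?_) fun p hp => ?_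
  · rintro _ ⟨i, rfl⟩
    rw [SetLike.mem_coe, hN]
    by_cases hi : i ∈ s
    · simp [adaptedMatrix, hi]
    · simp only [adaptedMatrix, of_apply, hi, if_false, eval_mul, eval_X, zero_mul]
      exact zero_mem _
  · have hsplit : p = C ∘ (fun i => (p i).eval 0) + (X : K[X]) • fun i => (p i).divX := by
      funext i
      simp [← coeff_zero_eq_eval_zero, add_comm, X_mul_divX_add]
    rw [hsplit]
    exact add_mem (C_comp_mem_span_adaptedMatrix u s ((hN p).1 hp))
      (X_smul_mem_span_adaptedMatrix u s _)

theorem det_adaptedMatrix : (adaptedMatrix u s).det = X ^ #sᶜ * C (of ⇑u).det := by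
  have : adaptedMatrix u s = diagonal (fun i => if i ∈ s then 1 else X) * (of ⇑u).map C := by
    ext i j
    simp [adaptedMatrix]
  rw [this, det_mul, det_diagonal, prod_ite, prod_const_one, one_mul, prod_const,
    RingHom.map_det, RingHom.mapMatrix_apply, filter_notMem_eq_sdiff, ← compl_eq_univ_sdiff]

theorem degree_det_adaptedMatrix : (adaptedMatrix u s).det.degree = #sᶜ := by
  rw [det_adaptedMatrix, degree_mul, degree_X_pow, degree_C u.isUnit_det_of.ne_zero, add_zero]

theorem linearIndependent_adaptedMatrix : LinearIndependent K[X] (adaptedMatrix u s) := by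
  refine linearIndependent_rows_of_det_ne_zero fun h => ?_
  simpa [h] using degree_det_adaptedMatrix u s

end AdaptedMatrix

theorem mem_approxModule_X_map_C_iff {K : Type*} [Field K] {m n : ℕ}
    (F : Matrix (Fin m) (Fin n) K) (p : Fin m → K[X]) :
    p ∈ approxModule (X : K[X]) (F.map C) ↔
      (fun i => (p i).eval 0) ∈ LinearMap.ker F.vecMulLinear := by
  have eval_vecMul : ∀ j, ((p ᵥ* F.map C) j).eval 0 = ((fun i => (p i).eval 0) ᵥ* F) j := by
    simp [vecMul, dotProduct, eval_finsetSum]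
  simp only [approxModule, Submodule.mem_mk, AddSubmonoid.mem_mk, AddSubsemigroup.mem_mk,
    Set.mem_ofPred_eq, X_dvd_iff, coeff_zero_eq_eval_zero, eval_vecMul, LinearMap.mem_ker,
    vecMulLinear_apply, funext_iff, Pi.zero_apply]

theorem Matrix.finrank_ker_vecMulLinear_add_rank {K m n : Type*} [Field K] [Fintype m]
    [Fintype n] (F : Matrix m n K) :
    finrank K (LinearMap.ker F.vecMulLinear) + F.rank = Fintype.card m := by
  have hrange : finrank K (LinearMap.range F.vecMulLinear) = F.rank := by
    rw [← mulVecLin_transpose, ← rank, rank_transpose]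
  rw [add_comm, ← hrange, LinearMap.finrank_range_add_finrank_ker, finrank_fintype_fun_eq_card]

/-- for a constant matrix `F ∈ K^{m×n}`, the module `A_x(F)` (for the
polynomial matrix obtained from `F` and the modulus `x`) is free of rank `m`, and every
matrix `P ∈ K[x]^{m×m}` whose rows form a basis of `A_x(F)` satisfies
`deg det(P) = rank(F)`. -/
theorem stmt15 {K : Type*} [Field K] {m n : ℕ} (F : Matrix (Fin m) (Fin n) K) :
    Nonempty (Module.Basis (Fin m) K[X] (approxModule (X : K[X]) (F.map Polynomial.C))) ∧
      ∀ P : Matrix (Fin m) (Fin m) K[X],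
        IsBasisOf (fun i => P i) (approxModule (X : K[X]) (F.map Polynomial.C)) →
          P.det.degree = (F.rank : WithBot ℕ) := by
  set A := approxModule (X : K[X]) (F.map Polynomial.C)
  obtain ⟨u, s, hW, hs_card⟩ :=
    (Pi.basisFun K (Fin m)).exists_span_image_eq (LinearMap.ker F.vecMulLinear)
  have hspan : span K[X] (Set.range (adaptedMatrix u s)) = A :=
    span_adaptedMatrix_eq u s fun p => by rw [hW]; exact mem_approxModule_X_map_C_iff F p
  have hcard : #sᶜ = F.rank := by
    have := F.finrank_ker_vecMulLinear_add_rank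
    rw [card_compl]
    omega
  refine ⟨⟨(Basis.span (linearIndependent_adaptedMatrix u s)).map (.ofEq _ _ hspan)⟩,
    fun P hP => ?_⟩
  rw [degree_eq_degree_of_associated (det_associated_of_span_rows_eq (hP.2.trans hspan.symm)),
    degree_det_adaptedMatrix, hcard]

end
end
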